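/- Let s = [[0,−1],[1,0]] and t = [[0,−1],[1,−1]] in SL(2,ℤ), and for positive integers m, ℓ define A(m,ℓ) = (s·t⁻¹)^m · (s·t)^ℓ in SL(2,ℤ). If (m,ℓ) and (m′,ℓ′) are distinct pairs of positive integers, then A(m,ℓ) is not conjugate in SL(2,ℤ) to either A(m′,ℓ′) or −A(m′,ℓ′); that is, the words x^m y^ℓ define pairwise distinct conjugacy classes in PSL₂(ℤ). -/

import Mathlib

/-!
Write `X = s t⁻¹ = [[1,0],[-1,1]]` and `Y = -s t = [[1,-1],[0,1]]`, so that
`A(m,ℓ) = ±B(m,ℓ)` with `B(m,ℓ) = X^m Y^ℓ = [[1,-ℓ],[-m,mℓ+1]]`. Since `tr B(m,ℓ) = mℓ + 2 > 0`,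
`B(m,ℓ)` is never conjugate to `-B(m',ℓ')`, and conjugacy of `B(m,ℓ)` and `B(m',ℓ')` forces
`mℓ = m'ℓ'`.

Suppose `g B = B' g` with `g = [[a,b],[c,d]] ∈ SL₂(ℤ)`. Then `g B^{±1}` intertwine as well, and
the determinant condition becomes `Y² + N c Y - N c² = m m'` for `Y = m d`, `N = mℓ`, while the
intertwining relation `ℓ c = m' b` gives `N c² ≥ m m'` whenever `c ≠ 0`. These two facts pin
`Y/c` to `(0, 2) ∪ (-N-2, -N)`, which is exactly the condition for one of the lower-left
entries `c - Y` of `g B` or `(N+1)c + Y` of `g B⁻¹` to be smaller than `c` in absolute value.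
Descending, we reach an intertwiner with `c = 0`; it is diagonal with entries `±1`, and the
relation `m d = m' a` gives `m = m'`, hence `ℓ = ℓ'`.
-/

open Matrix MatrixGroups

lemma isConj_neg_neg {G : Type*} [Group G] [HasDistribNeg G] {a b : G} :
    IsConj (-a) (-b) ↔ IsConj a b := by
  have key : ∀ x y : G, IsConj x y → IsConj (-x) (-y) := fun x y h => by
    obtain ⟨c, rfl⟩ := isConj_iff.mp h
    exact isConj_iff.mpr ⟨c, by rw [mul_neg, neg_mul]⟩
  exact ⟨fun h => by simpa using key _ _ h, key a b⟩

lemma IsConj.trace_eq {n R : Type*} [Fintype n] [DecidableEq n] [CommRing R]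
    {g h : SpecialLinearGroup n R} (hgh : IsConj g h) :
    trace (g : Matrix n n R) = trace (h : Matrix n n R) := by
  obtain ⟨c, rfl⟩ := isConj_iff.mp hgh
  rw [Matrix.SpecialLinearGroup.coe_mul, trace_mul_comm, ← Matrix.SpecialLinearGroup.coe_mul,
    inv_mul_cancel_left]

lemma Matrix.SpecialLinearGroup.det_fin_two_eq_one {R : Type*} [CommRing R] (g : SL(2, R)) :
    g 0 0 * g 1 1 - g 0 1 * g 1 0 = 1 := by
  rw [← det_fin_two]
  exact g.det_coe

/-- The matrix `X^m Y^l` with `X = [[1,0],[-1,1]]` and `Y = [[1,-1],[0,1]]`. -/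
def xyWord (m l : ℤ) : SL(2, ℤ) :=
  ⟨!![1, -l; -m, m * l + 1], by rw [det_fin_two_of]; ring⟩

@[simp]
lemma coe_xyWord (m l : ℤ) :
    (xyWord m l : Matrix (Fin 2) (Fin 2) ℤ) = !![1, -l; -m, m * l + 1] :=
  rfl

lemma trace_xyWord (m l : ℤ) : trace (xyWord m l : Matrix (Fin 2) (Fin 2) ℤ) = m * l + 2 := by
  rw [coe_xyWord, trace_fin_two_of]
  ring

lemma xyWord_one_zero_pow (n : ℕ) : xyWord 1 0 ^ n = xyWord n 0 := by
  induction n with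
  | zero => ext i j; fin_cases i <;> fin_cases j <;> rfl
  | succ n ih =>
    rw [pow_succ, ih]
    ext i j
    fin_cases i <;> fin_cases j <;> simp [mul_apply, add_comm]

lemma xyWord_zero_one_pow (n : ℕ) : xyWord 0 1 ^ n = xyWord 0 n := by
  induction n with
  | zero => ext i j; fin_cases i <;> fin_cases j <;> rfl
  | succ n ih =>
    rw [pow_succ, ih]
    ext i j
    fin_cases i <;> fin_cases j <;> simp [mul_apply, add_comm]

lemma xyWord_mul_xyWord (m l : ℤ) : xyWord m 0 * xyWord 0 l = xyWord m l := by
  ext i j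
  fin_cases i <;> fin_cases j <;> simp [mul_apply]

lemma pow_mul_pow_eq_xyWord_or_neg {s t : SL(2, ℤ)} (hs : s = ⟨!![0, -1; 1, 0], by decide⟩)
    (ht : t = ⟨!![0, -1; 1, -1], by decide⟩) (m l : ℕ) :
    (s * t⁻¹) ^ m * (s * t) ^ l = xyWord m l ∨ (s * t⁻¹) ^ m * (s * t) ^ l = -xyWord m l := by
  have hx : s * t⁻¹ = xyWord 1 0 := by
    subst hs ht; ext i j; fin_cases i <;> fin_cases j <;> rfl
  have hy : s * t = -xyWord 0 1 := by
    subst hs ht; ext i j; fin_cases i <;> fin_cases j <;> rfl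
  rw [hx, hy, neg_pow, xyWord_one_zero_pow, xyWord_zero_one_pow]
  rcases neg_one_pow_eq_or SL(2, ℤ) l with h | h <;> simp [h, xyWord_mul_xyWord]

/-- The descent inequality, for `c = g 1 0`, `Y = m * g 1 1` and `N = m * l`. -/
lemma abs_sub_lt_or_abs_add_lt {N c Y : ℤ} (hN : 0 ≤ N) (hc : c ≠ 0)
    (hpos : 0 < Y ^ 2 + N * c * Y - N * c ^ 2) (hle : Y ^ 2 + N * c * Y - N * c ^ 2 ≤ N * c ^ 2) :
    |c - Y| < |c| ∨ |(N + 1) * c + Y| < |c| := by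
  wlog hc_pos : 0 < c generalizing c Y
  · have := this (c := -c) (Y := -Y) (neg_ne_zero.mpr hc) (by linarith) (by linarith) (by omega)
    rwa [show -c - -Y = -(c - Y) by ring, show (N + 1) * -c + -Y = -((N + 1) * c + Y) by ring,
      abs_neg, abs_neg, abs_neg] at this
  have upper : (Y - 2 * c) * (Y + (N + 2) * c) < 0 := by nlinarith
  have outer : 0 < Y * (Y + N * c) := by nlinarith
  rw [abs_of_pos hc_pos, abs_lt, abs_lt]
  rcases lt_or_gt_of_ne (show Y ≠ 0 by rintro rfl; simp at outer) with hY | hY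
  · right
    have : Y + N * c < 0 := by nlinarith
    have : -(N + 2) * c < Y := by nlinarith
    constructor <;> nlinarith
  · left
    have : Y < 2 * c := by nlinarith
    constructor <;> linarith

section Conjugacy

variable {m l m' l' : ℤ}

lemma intertwiner_relations {g : SL(2, ℤ)} (h : g * xyWord m l = xyWord m' l' * g)
    (hN : m * l = m' * l') :
    l * g 1 0 = m' * g 0 1 ∧ m * g 1 1 = m' * (g 0 0 - l' * g 1 0) := by
  have entry : ∀ i j, (g * xyWord m l) i j = (xyWord m' l' * g) i j := by simp [h]
  have e10 := entry 1 0
  have e11 := entry 1 1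
  simp only [Matrix.SpecialLinearGroup.coe_mul, coe_xyWord, mul_apply, of_apply, cons_val',
    cons_val_zero, cons_val_one, cons_val_fin_one, Fin.sum_univ_two, mul_one, mul_neg] at e10 e11
  exact ⟨by linear_combination -e11 + g 1 1 * hN, by linear_combination -e10⟩

lemma exists_intertwiner_natAbs_lt (hm : 0 < m) (hl : 0 < l) (hm' : 0 < m')
    (hN : m * l = m' * l') {g : SL(2, ℤ)} (h : g * xyWord m l = xyWord m' l' * g)
    (hc : g 1 0 ≠ 0) :
    ∃ g' : SL(2, ℤ), g' * xyWord m l = xyWord m' l' * g' ∧ (g' 1 0).natAbs < (g 1 0).natAbs := by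
  obtain ⟨hbc, had⟩ := intertwiner_relations h hN
  have key : (m * g 1 1) ^ 2 + m * l * g 1 0 * (m * g 1 1) - m * l * g 1 0 ^ 2 = m * m' := by
    linear_combination (m * m') * g.det_fin_two_eq_one + (m * g 1 1) * had - (m * g 1 0) * hbc +
      (m * g 1 0 * g 1 1) * hN
  have hlc : l * g 1 0 ^ 2 = m' * (g 0 1 * g 1 0) := by linear_combination g 1 0 * hbc
  have hbc_pos : 0 < g 0 1 * g 1 0 := pos_of_mul_pos_right (hlc ▸ by positivity) hm'.le
  have hle : m * m' ≤ m * l * g 1 0 ^ 2 := by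
    rw [mul_assoc, hlc]
    exact mul_le_mul_of_nonneg_left (le_mul_of_one_le_right hm'.le hbc_pos) hm.le
  zify
  obtain hlt | hlt :=
    abs_sub_lt_or_abs_add_lt (by positivity) hc (key ▸ by positivity) (key ▸ hle)
  · refine ⟨g * xyWord m l, by rw [← mul_assoc, ← h], ?_⟩
    convert hlt using 2
    simp [mul_apply, Fin.sum_univ_two, sub_eq_add_neg, mul_comm]
  · refine ⟨g * (xyWord m l)⁻¹, ?_, ?_⟩
    · rw [mul_assoc, inv_mul_cancel, mul_one, ← mul_assoc, ← h, mul_inv_cancel_right]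
    convert hlt using 2
    simp [mul_apply, Fin.sum_univ_two, Matrix.SpecialLinearGroup.coe_inv, adjugate_fin_two_of,
      mul_comm]

theorem eq_of_mul_xyWord_eq_xyWord_mul (hm : 0 < m) (hl : 0 < l) (hm' : 0 < m')
    (hN : m * l = m' * l') {g : SL(2, ℤ)} (h : g * xyWord m l = xyWord m' l' * g) :
    m = m' ∧ l = l' := by
  induction hn : (g 1 0).natAbs using Nat.strong_induction_on generalizing g with
  | _ n ih =>
    by_cases hc : g 1 0 = 0
    · have had := (intertwiner_relations h hN).2
      have hdet : g 0 0 * g 1 1 = 1 := by simpa [hc] using g.det_fin_two_eq_one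
      have hmm' : m = m' := by
        rcases Int.eq_one_or_neg_one_of_mul_eq_one' hdet with ⟨ha, hd⟩ | ⟨ha, hd⟩ <;>
          simpa [ha, hd, hc] using had
      subst hmm'
      exact ⟨rfl, mul_left_cancel₀ hm.ne' hN⟩
    · obtain ⟨g', hg', hlt⟩ := exists_intertwiner_natAbs_lt hm hl hm' hN h hc
      exact ih _ (hn ▸ hlt) hg' rfl

theorem eq_of_isConj_xyWord (hm : 0 < m) (hl : 0 < l) (hm' : 0 < m')
    (h : IsConj (xyWord m l) (xyWord m' l')) : m = m' ∧ l = l' := by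
  have hN : m * l = m' * l' := by simpa [trace_xyWord] using h.trace_eq
  obtain ⟨c, hc⟩ := isConj_iff.mp h
  exact eq_of_mul_xyWord_eq_xyWord_mul hm hl hm' hN (g := c) (by rw [← hc, inv_mul_cancel_right])

theorem not_isConj_xyWord_neg (hml : 0 ≤ m * l) (hml' : 0 ≤ m' * l') :
    ¬ IsConj (xyWord m l) (-xyWord m' l') := by
  intro h
  have htr := h.trace_eq
  simp only [Matrix.SpecialLinearGroup.coe_neg, trace_neg, trace_xyWord] at htr
  linarith

theorem eq_of_isConj_of_eq_xyWord_or_neg (hm : 0 < m) (hl : 0 < l) (hm' : 0 < m')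
    (hl' : 0 ≤ l') {X Y : SL(2, ℤ)} (hX : X = xyWord m l ∨ X = -xyWord m l)
    (hY : Y = xyWord m' l' ∨ Y = -xyWord m' l') (h : IsConj X Y) : m = m' ∧ l = l' := by
  have key : IsConj (xyWord m l) (xyWord m' l') ∨ IsConj (xyWord m l) (-xyWord m' l') := by
    rcases hX with rfl | rfl <;> rcases hY with rfl | rfl
    · exact Or.inl h
    · exact Or.inr h
    · exact Or.inr (isConj_neg_neg.mp (by rwa [neg_neg]))
    · exact Or.inl (isConj_neg_neg.mp h)
  rcases key with h | h
  · exact eq_of_isConj_xyWord hm hl hm' h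
  · exact absurd h (not_isConj_xyWord_neg (by positivity) (by positivity))

end Conjugacy

/-- The words `x^m y^ℓ` on the modular template define pairwise distinct conjugacy
classes in `PSL₂(ℤ)`: with `s = [[0,-1],[1,0]]`, `t = [[0,-1],[1,-1]]` and
`A(m,ℓ) = (s t⁻¹)^m (s t)^ℓ` in `SL(2,ℤ)`, distinct pairs of positive integers `(m,ℓ)`
and `(m',ℓ')` give `A(m,ℓ)` not conjugate to `A(m',ℓ')` nor to `-A(m',ℓ')`. -/
theorem stmt_10 (s t : Matrix.SpecialLinearGroup (Fin 2) ℤ)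
    (hs : s = ⟨!![0, -1; 1, 0], by decide⟩)
    (ht : t = ⟨!![0, -1; 1, -1], by decide⟩)
    (A : ℕ → ℕ → Matrix.SpecialLinearGroup (Fin 2) ℤ)
    (hA : ∀ m ℓ, A m ℓ = (s * t⁻¹) ^ m * (s * t) ^ ℓ)
    (m ℓ m' ℓ' : ℕ) (hm : 0 < m) (hℓ : 0 < ℓ) (hm' : 0 < m') (hℓ' : 0 < ℓ')
    (hne : (m, ℓ) ≠ (m', ℓ')) :
    ¬ IsConj (A m ℓ) (A m' ℓ') ∧ ¬ IsConj (A m ℓ) (-(A m' ℓ')) := by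
  have hA_sign : ∀ m ℓ, A m ℓ = xyWord m ℓ ∨ A m ℓ = -xyWord m ℓ := fun m ℓ =>
    hA m ℓ ▸ pow_mul_pow_eq_xyWord_or_neg hs ht m ℓ
  have hA_sign_neg : -A m' ℓ' = xyWord m' ℓ' ∨ -A m' ℓ' = -xyWord m' ℓ' :=
    (hA_sign m' ℓ').elim (fun h => Or.inr (by rw [h])) (fun h => Or.inl (by rw [h, neg_neg]))
  have not_isConj : ∀ Y, (Y = xyWord m' ℓ' ∨ Y = -xyWord m' ℓ') → ¬ IsConj (A m ℓ) Y :=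
    fun Y hY h => hne <| by
      obtain ⟨hmm', hℓℓ'⟩ := eq_of_isConj_of_eq_xyWord_or_neg (by omega) (by omega) (by omega)
        (by omega) (hA_sign m ℓ) hY h
      exact Prod.ext (Nat.cast_injective hmm') (Nat.cast_injective hℓℓ')
  exact ⟨not_isConj _ (hA_sign m' ℓ'), not_isConj _ hA_sign_neg⟩
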